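/- Let x and y be positive real numbers such that x, y and x + y are all irrational. Then for all sufficiently large positive integers n, B(x+y, n) ≤ B(x, n) + B(y, n) + 1. -/
import Mathlib


/-- `binaryOnes x n` is `B(x, n)`: the number of `1`'s among the first `n` binary digits of `x`
after the binary point, i.e. the number of `i` with `1 ≤ i ≤ n` and `⌊2^i·x⌋ mod 2 = 1`. -/
noncomputable def binaryOnes (x : ℝ) (n : ℕ) : ℕ :=
  ((Finset.Icc 1 n).filter fun i => ⌊(2 : ℝ) ^ i * x⌋ % 2 = 1).card

lemma digit_eq (a : ℝ) : ⌊2 * a⌋ % 2 = ⌊2 * a⌋ - 2 * ⌊a⌋ := by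
  have h1 : 2 * ⌊a⌋ ≤ ⌊2 * a⌋ := by
    apply Int.le_floor.2; push_cast; linarith [Int.floor_le a]
  have h2 : ⌊2 * a⌋ < 2 * ⌊a⌋ + 2 := by
    apply Int.floor_lt.2; push_cast; linarith [Int.lt_floor_add_one a]
  omega

lemma card_eq_sum (z : ℝ) (n : ℕ) :
    (binaryOnes z n : ℤ) = ∑ i ∈ Finset.Icc 1 n, (⌊(2 : ℝ) ^ i * z⌋ % 2) := by
  rw [binaryOnes, Finset.card_filter]
  push_cast
  refine Finset.sum_congr rfl fun i _ => ?_
  rcases Int.emod_two_eq ⌊(2 : ℝ) ^ i * z⌋ with h | h <;> simp [h]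

lemma sum_bound (c : ℕ → ℤ) (h0 : ∀ i, 0 ≤ c i) (n : ℕ) :
    ∑ i ∈ Finset.Icc 1 n, (c i - 2 * c (i - 1)) ≤ c n := by
  induction n with
  | zero => simpa using h0 0
  | succ n ih =>
    rw [Finset.sum_Icc_succ_top (Nat.succ_le_succ n.zero_le)]
    simp only [Nat.add_sub_cancel]
    linarith [h0 n]

/-- If `x`, `y` and `x + y` are positive and irrational, then for all sufficiently large `n`,
`B(x+y, n) ≤ B(x, n) + B(y, n) + 1`. -/
theorem stmt_11 (x y : ℝ) (hx : 0 < x) (hy : 0 < y)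
    (hxi : Irrational x) (hyi : Irrational y) (hxyi : Irrational (x + y)) :
    ∃ n₀ : ℕ, ∀ n : ℕ, n₀ ≤ n →
      binaryOnes (x + y) n ≤ binaryOnes x n + binaryOnes y n + 1 := by
  refine ⟨0, fun n _ => ?_⟩
  set c : ℕ → ℤ := fun i =>
    ⌊(2 : ℝ) ^ i * (x + y)⌋ - ⌊(2 : ℝ) ^ i * x⌋ - ⌊(2 : ℝ) ^ i * y⌋ with hc
  have hc0 : ∀ i, 0 ≤ c i := by
    intro i
    have h1 : ⌊(2 : ℝ) ^ i * x⌋ + ⌊(2 : ℝ) ^ i * y⌋ ≤ ⌊(2 : ℝ) ^ i * (x + y)⌋ := by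
      apply Int.le_floor.2; push_cast
      linarith [Int.floor_le ((2 : ℝ) ^ i * x), Int.floor_le ((2 : ℝ) ^ i * y)]
    simp only [hc]; linarith
  have hc1 : ∀ i, c i ≤ 1 := by
    intro i
    have h1 : ⌊(2 : ℝ) ^ i * (x + y)⌋ < ⌊(2 : ℝ) ^ i * x⌋ + ⌊(2 : ℝ) ^ i * y⌋ + 2 := by
      apply Int.floor_lt.2; push_cast
      linarith [Int.lt_floor_add_one ((2 : ℝ) ^ i * x), Int.lt_floor_add_one ((2 : ℝ) ^ i * y)]
    simp only [hc]; linarith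
  have key : (binaryOnes (x + y) n : ℤ) - binaryOnes x n - binaryOnes y n
      = ∑ i ∈ Finset.Icc 1 n, (c i - 2 * c (i - 1)) := by
    rw [card_eq_sum, card_eq_sum, card_eq_sum, ← Finset.sum_sub_distrib,
      ← Finset.sum_sub_distrib]
    refine Finset.sum_congr rfl fun i hi => ?_
    have h1 : 1 ≤ i := (Finset.mem_Icc.1 hi).1
    obtain ⟨j, rfl⟩ : ∃ j, i = j + 1 := ⟨i - 1, by omega⟩
    have e : ∀ z : ℝ, (2 : ℝ) ^ (j + 1) * z = 2 * ((2 : ℝ) ^ j * z) := by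
      intro z; ring
    rw [e, e, e, digit_eq, digit_eq, digit_eq]
    simp only [hc, Nat.add_sub_cancel]
    ring
  have hs := sum_bound c hc0 n
  have h1 := hc1 n
  have : (binaryOnes (x + y) n : ℤ) ≤ binaryOnes x n + binaryOnes y n + 1 := by
    omega
  exact_mod_cast this
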